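/- arXiv:1302.6251 — 8 statements merged into one kernel-verified Lean document; each statement's English description precedes it below -/
import Mathlib

section
/- Let S be a finite type of cardinality n, let A be a Hermitian complex matrix indexed by S × S with eigenvalues λ_1^↓(A) ≥ … ≥ λ_n^↓(A) arranged in decreasing order, let 1 ≤ d ≤ n, and let v_1, …, v_d ∈ ℂ^S be an orthonormal family of vectors. Then Σ_{i=1}^d ⟨v_i, A v_i⟩ ≤ Σ_{i=1}^d λ_i^↓(A). -/
open Matrix
open scoped ComplexOrder Kronecker Classical

/-- Sum of the `d` largest eigenvalues (with multiplicity, decreasing order)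
of a Hermitian matrix. -/
noncomputable def sumTopEigs {n : Type*} [Fintype n] [DecidableEq n]
    {A : Matrix n n ℂ} (hA : A.IsHermitian) (d : ℕ) : ℝ :=
  ((((Finset.univ.val.map hA.eigenvalues).sort (· ≤ ·)).reverse.take d)).sum

/-- `ε^(d)(A) = 1 - Σ_{i=1}^d λ_i^↓(A)` for Hermitian `A` (junk value `0` otherwise). -/
noncomputable def epsD {n : Type*} [Fintype n] [DecidableEq n]
    (A : Matrix n n ℂ) (d : ℕ) : ℝ :=
  if h : A.IsHermitian then 1 - sumTopEigs h d else 0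

/-- `|ψ⟩⟨ψ|`. -/
noncomputable def outer {n : Type*} (ψ : n → ℂ) : Matrix n n ℂ :=
  fun i j => ψ i * star (ψ j)

/-- Partial trace over the second tensor factor. -/
noncomputable def ptraceR {S R : Type*} [Fintype R] (M : Matrix (S × R) (S × R) ℂ) :
    Matrix S S ℂ :=
  fun s s' => ∑ r, M (s, r) (s', r)

/-- Partial trace over the third tensor factor. -/
noncomputable def ptrace3 {S R A : Type*} [Fintype A] (M : Matrix (S × R × A) (S × R × A) ℂ) :
    Matrix (S × R) (S × R) ℂ :=
  fun p q => ∑ a, M (p.1, p.2, a) (q.1, q.2, a)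

/-- Partial trace over the second (middle) tensor factor. -/
noncomputable def ptrace2 {S R A : Type*} [Fintype R] (M : Matrix (S × R × A) (S × R × A) ℂ) :
    Matrix (S × A) (S × A) ℂ :=
  fun p q => ∑ r, M (p.1, r, p.2) (q.1, r, q.2)

/-- Partial trace over the second and third tensor factors. -/
noncomputable def ptrace23 {S R A : Type*} [Fintype R] [Fintype A]
    (M : Matrix (S × R × A) (S × R × A) ℂ) : Matrix S S ℂ :=
  fun s s' => ∑ r, ∑ a, M (s, r, a) (s', r, a)

/-- Convex-roof extension `E^(d)_{S|R}`: the infimum over all finite pure-state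
convex decompositions `ρ = Σ_k p_k |ψ_k⟩⟨ψ_k|` of `Σ_k p_k ε^(d)(tr_R |ψ_k⟩⟨ψ_k|)`. -/
noncomputable def convRoofE {S R : Type*} [Fintype S] [Fintype R] [DecidableEq S]
    (d : ℕ) (ρ : Matrix (S × R) (S × R) ℂ) : ℝ :=
  sInf { e : ℝ | ∃ (m : ℕ) (p : Fin m → ℝ) (ψ : Fin m → (S × R → ℂ)),
    (∀ k, 0 ≤ p k) ∧ (∑ k, p k = 1) ∧
    (∀ k, star (ψ k) ⬝ᵥ ψ k = 1) ∧
    (ρ = ∑ k, (p k : ℂ) • outer (ψ k)) ∧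
    e = ∑ k, p k * epsD (ptraceR (outer (ψ k))) d }

/-- Classical correlations `C^(d)_{S|A}`:
`ε^(d)(tr_A ρ)` minus the infimum over all POVMs `{M_x}` on `A` of
`Σ_x p_x ε^(d)(p_x⁻¹ tr_A((1_S ⊗ M_x) ρ))`, where `p_x = tr((1_S ⊗ M_x) ρ)`
and terms with `p_x = 0` are omitted. -/
noncomputable def classC {S A : Type*} [Fintype S] [Fintype A] [DecidableEq S] [DecidableEq A]
    (d : ℕ) (ρ : Matrix (S × A) (S × A) ℂ) : ℝ :=
  epsD (ptraceR ρ) d -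
  sInf { e : ℝ | ∃ (m : ℕ) (M : Fin m → Matrix A A ℂ),
    (∀ x, (M x).PosSemidef) ∧ (∑ x, M x = 1) ∧
    e = ∑ x,
      (if (((1 : Matrix S S ℂ) ⊗ₖ M x) * ρ).trace = 0 then 0
       else ((((1 : Matrix S S ℂ) ⊗ₖ M x) * ρ).trace).re *
         epsD (((((1 : Matrix S S ℂ) ⊗ₖ M x) * ρ).trace)⁻¹ •
           ptraceR (((1 : Matrix S S ℂ) ⊗ₖ M x) * ρ)) d) }


/-! Expand each `v i` in an orthonormal eigenbasis `b` of `A`: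
`⟪v i, A v i⟫ = ∑ k, λ k * ‖⟪b k, v i⟫‖ ^ 2`. The weights `t k = ∑ i, ‖⟪b k, v i⟫‖ ^ 2` lie in
`[0, 1]` by Bessel's inequality and add up to `d` by Parseval's identity, and a combination
`∑ k, λ k * t k` with such weights is at most the sum of the `d` largest `λ k`
(the bathtub principle: put all the mass on the top `d` indices). -/

open Finset RCLike InnerProductSpace

theorem Finset.sum_mul_le_sum_of_sum_eq_card {ι : Type*} [Fintype ι] [DecidableEq ι]
    {f t : ι → ℝ} {T : Finset ι} (ht₀ : ∀ i, 0 ≤ t i) (ht₁ : ∀ i, t i ≤ 1)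
    (ht : ∑ i, t i = #T) (hf : ∀ i ∈ T, ∀ j ∉ T, f j ≤ f i) :
    ∑ i, f i * t i ≤ ∑ i ∈ T, f i := by
  rcases T.eq_empty_or_nonempty with rfl | hT
  · have ht_zero : t = 0 := (Fintype.sum_eq_zero_iff_of_nonneg ht₀).1 (by simpa using ht)
    simp [ht_zero]
  set μ := T.inf' hT f
  have hμT : ∀ i ∈ T, 0 ≤ f i - μ := fun i hi => sub_nonneg.2 (inf'_le f hi)
  have hμTc : ∀ j ∉ T, f j - μ ≤ 0 := fun j hj =>
    sub_nonpos.2 ((le_inf'_iff hT f).2 fun i hi => hf i hi j hj)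
  have hshift : ∑ i, (f i - μ) * t i ≤ ∑ i ∈ T, (f i - μ) := by
    rw [← sum_add_sum_compl T]
    have hin : ∑ i ∈ T, (f i - μ) * t i ≤ ∑ i ∈ T, (f i - μ) :=
      sum_le_sum fun i hi => mul_le_of_le_one_right (hμT i hi) (ht₁ i)
    have hout : ∑ j ∈ Tᶜ, (f j - μ) * t j ≤ 0 :=
      sum_nonpos fun j hj => mul_nonpos_of_nonpos_of_nonneg (hμTc j (mem_compl.1 hj)) (ht₀ j)
    linarith
  simp only [sub_mul, sum_sub_distrib, ← mul_sum, ht, sum_const, nsmul_eq_mul] at hshift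
  linarith

namespace LinearMap.IsSymmetric

variable {𝕜 E : Type*} [RCLike 𝕜] [NormedAddCommGroup E] [InnerProductSpace 𝕜 E]
  [FiniteDimensional 𝕜 E] {T : E →ₗ[𝕜] E} (hT : T.IsSymmetric) {n : ℕ}
  (hn : Module.finrank 𝕜 E = n)

theorem re_inner_map_self_eq_sum_eigenvalues (x : E) :
    re ⟪x, T x⟫_𝕜 =
      ∑ k, hT.eigenvalues hn k * ‖⟪hT.eigenvectorBasis hn k, x⟫_𝕜‖ ^ 2 := by
  set b := hT.eigenvectorBasis hn
  have hTb : ∀ k, ⟪b k, T x⟫_𝕜 = hT.eigenvalues hn k * ⟪b k, x⟫_𝕜 := fun k => by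
    rw [← b.repr_apply_apply, ← b.repr_apply_apply]
    exact hT.eigenvectorBasis_apply_self_apply hn x k
  rw [← b.sum_inner_mul_inner x (T x), map_sum]
  refine sum_congr rfl fun k _ => ?_
  rw [hTb, mul_left_comm, re_ofReal_mul, ← inner_conj_symm, RCLike.conj_mul, ← ofReal_pow, ofReal_re]

theorem sum_re_inner_le_sum_eigenvalues {d : ℕ} (hd : d ≤ n) {v : Fin d → E}
    (hv : Orthonormal 𝕜 v) :
    ∑ i, re ⟪v i, T (v i)⟫_𝕜 ≤ ∑ k : Fin n with k.val < d, hT.eigenvalues hn k := by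
  set b := hT.eigenvectorBasis hn
  set t : Fin n → ℝ := fun k => ∑ i, ‖⟪b k, v i⟫_𝕜‖ ^ 2
  have ht₀ : ∀ k, 0 ≤ t k := fun k => by positivity
  have ht₁ : ∀ k, t k ≤ 1 := fun k => by
    simpa only [t, norm_inner_symm, b.orthonormal.1 k, one_pow] using
      hv.sum_inner_products_le (b k) (s := univ)
  have ht : ∑ k, t k = #{k : Fin n | k.val < d} := by
    simp only [t, Fin.card_filter_val_lt, min_eq_right hd]
    rw [sum_comm]
    simp [b.sum_sq_norm_inner_right, hv.1]
  calc ∑ i, re ⟪v i, T (v i)⟫_𝕜 = ∑ k, hT.eigenvalues hn k * t k := by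
        simp only [hT.re_inner_map_self_eq_sum_eigenvalues hn, t, mul_sum]
        exact sum_comm
    _ ≤ _ := sum_mul_le_sum_of_sum_eq_card ht₀ ht₁ ht fun k hk j hj => by
        simp only [mem_filter, mem_univ, true_and, not_lt] at hk hj
        exact hT.eigenvalues_antitone hn (Fin.le_def.2 (by omega))

end LinearMap.IsSymmetric

theorem Matrix.IsHermitian.sumTopEigs_eq {n : Type*} [Fintype n] [DecidableEq n]
    {A : Matrix n n ℂ} (hA : A.IsHermitian) (d : ℕ) :
    sumTopEigs hA d = ∑ k : Fin (Fintype.card n) with k.val < d, hA.eigenvalues₀ k := by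
  have hmap : univ.val.map hA.eigenvalues = ↑(List.ofFn hA.eigenvalues₀).reverse := by
    change univ.val.map (hA.eigenvalues₀ ∘ _) = _
    rw [← Multiset.map_map, Multiset.map_univ_val_equiv, Fin.univ_val_map, Multiset.coe_reverse]
  have hsorted : (List.ofFn hA.eigenvalues₀).reverse.Pairwise (· ≤ ·) := by
    simpa [List.pairwise_reverse] using hA.eigenvalues₀_antitone.sortedGE_ofFn.pairwise
  rw [sumTopEigs, hmap, Multiset.coe_sort, List.mergeSort_of_pairwise (by simpa using hsorted),
    List.reverse_reverse, List.sum_take_ofFn]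

theorem stmt0_general {S : Type*} [Fintype S] [DecidableEq S] (A : Matrix S S ℂ)
    (hA : A.IsHermitian) (d : ℕ) (hdn : d ≤ Fintype.card S)
    (v : Fin d → S → ℂ)
    (hortho : ∀ i j, star (v i) ⬝ᵥ v j = if i = j then 1 else 0) :
    ∑ i, star (v i) ⬝ᵥ (A *ᵥ v i) ≤ ((sumTopEigs hA d : ℝ) : ℂ) := by
  have hT := isSymmetric_toEuclideanLin_iff.mpr hA
  set x : Fin d → EuclideanSpace ℂ S := fun i => WithLp.toLp 2 (v i)
  have hx : Orthonormal ℂ x :=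
    orthonormal_iff_ite.2 fun i j => by rw [EuclideanSpace.inner_toLp_toLp, dotProduct_comm, hortho]
  have hquad : ∀ i, star (v i) ⬝ᵥ (A *ᵥ v i) = ⟪x i, toEuclideanLin A (x i)⟫_ℂ := fun i => by
    rw [EuclideanSpace.inner_eq_star_dotProduct, dotProduct_comm]
    rfl
  calc ∑ i, star (v i) ⬝ᵥ (A *ᵥ v i)
      = ((∑ i, re ⟪x i, toEuclideanLin A (x i)⟫_ℂ : ℝ) : ℂ) := by
        push_cast
        exact sum_congr rfl fun i _ => (hquad i).trans (hT.coe_re_inner_self_apply (x i)).symm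
    _ ≤ ((∑ k : Fin (Fintype.card S) with k.val < d, hA.eigenvalues₀ k : ℝ) : ℂ) :=
        Complex.real_le_real.2 (hT.sum_re_inner_le_sum_eigenvalues finrank_euclideanSpace hdn hx)
    _ = ((sumTopEigs hA d : ℝ) : ℂ) := by rw [hA.sumTopEigs_eq]

/-- Cauchy interlacing / Ky Fan bound: for a Hermitian matrix `A` on a
finite type `S` of cardinality `n`, `1 ≤ d ≤ n`, and an orthonormal family
`v_1, …, v_d`, one has `Σ_{i=1}^d ⟨v_i, A v_i⟩ ≤ Σ_{i=1}^d λ_i^↓(A)`. -/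
theorem stmt0 {S : Type*} [Fintype S] [DecidableEq S] (A : Matrix S S ℂ)
    (hA : A.IsHermitian) (d : ℕ) (hd1 : 1 ≤ d) (hdn : d ≤ Fintype.card S)
    (v : Fin d → S → ℂ)
    (hortho : ∀ i j, star (v i) ⬝ᵥ v j = if i = j then 1 else 0) :
    ∑ i, star (v i) ⬝ᵥ (A *ᵥ v i) ≤ ((sumTopEigs hA d : ℝ) : ℂ) :=
  stmt0_general A hA d hdn v hortho
end

section
/- (Uniqueness of purification up to a local unitary on the ancilla) Let B and A be nonempty finite types and let ψ, φ ∈ ℂ^{B×A} be unit vectors such that tr_A |ψ⟩⟨ψ| = tr_A |φ⟩⟨φ|. Then there exists a unitary matrix U on ℂ^A such that (1_B ⊗ U) ψ = φ. -/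
open Matrix
open scoped ComplexOrder Kronecker Classical

/-!
Write a vector of `ℂ^{B×A}` as `vec X` for a matrix `X` indexed by `A × B`. Then the reduced state
on `B` is `(Xᴴ * X)ᵀ`, and `1 ⊗ U` acts as `X ↦ U * X`. So it suffices to show that `Xᴴ * X = Yᴴ * Y`
forces `Y = U * X` for a unitary `U`: equality of the Gram matrices makes `X v ↦ Y v` a well-defined
isometry on the range of `X`, and any isometry defined on a subspace extends to a unitary of
the whole space.
-/

theorem LinearMap.exists_linearIsometry_comp_eq_of_norm_eq {𝕜 E F : Type*} [RCLike 𝕜]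
    [AddCommGroup E] [Module 𝕜 E] [NormedAddCommGroup F] [InnerProductSpace 𝕜 F]
    [FiniteDimensional 𝕜 F] {T S : E →ₗ[𝕜] F} (h : ∀ v, ‖T v‖ = ‖S v‖) :
    ∃ W : F →ₗᵢ[𝕜] F, ∀ v, W (T v) = S v := by
  have hker : LinearMap.ker T ≤ LinearMap.ker S := fun v hv => by
    rw [LinearMap.mem_ker, ← norm_eq_zero, ← h, hv, norm_zero]
  let g : LinearMap.range T →ₗ[𝕜] F :=
    (LinearMap.ker T).liftQ S hker ∘ₗ T.quotKerEquivRange.symm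
  have hg (v : E) : g ⟨T v, LinearMap.mem_range_self T v⟩ = S v := by
    simp [g, T.quotKerEquivRange_symm_apply_image v]
  let L : LinearMap.range T →ₗᵢ[𝕜] F := ⟨g, by rintro ⟨_, v, rfl⟩; rw [hg, ← h]; rfl⟩
  exact ⟨L.extend, fun v => (L.extend_apply ⟨T v, LinearMap.mem_range_self T v⟩).trans (hg v)⟩

namespace Matrix

variable {𝕜 m n : Type*} [RCLike 𝕜] [Fintype m] [Fintype n] [DecidableEq n]

theorem norm_toEuclideanLin_sq (X : Matrix m n 𝕜) (v : EuclideanSpace 𝕜 n) :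
    ‖toEuclideanLin X v‖ ^ 2 = RCLike.re (star v.ofLp ⬝ᵥ (Xᴴ * X) *ᵥ v.ofLp) := by
  rw [@norm_sq_eq_re_inner 𝕜, EuclideanSpace.inner_eq_star_dotProduct, ofLp_toLpLin, toLin'_apply,
    ← mulVec_mulVec, dotProduct_mulVec, ← star_mulVec, dotProduct_comm]

theorem exists_mem_unitaryGroup_mul_eq_of_conjTranspose_mul_self_eq [DecidableEq m]
    {X Y : Matrix m n 𝕜} (h : Xᴴ * X = Yᴴ * Y) : ∃ U ∈ unitaryGroup m 𝕜, U * X = Y := by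
  have hnorm (v : EuclideanSpace 𝕜 n) : ‖toEuclideanLin X v‖ = ‖toEuclideanLin Y v‖ := by
    rw [← sq_eq_sq₀ (norm_nonneg _) (norm_nonneg _), norm_toEuclideanLin_sq,
      norm_toEuclideanLin_sq, h]
  obtain ⟨W, hW⟩ := LinearMap.exists_linearIsometry_comp_eq_of_norm_eq hnorm
  let e := W.toLinearIsometryEquiv rfl
  refine ⟨(toEuclideanCLM (𝕜 := 𝕜) (n := m)).symm (e : EuclideanSpace 𝕜 m →L[𝕜] _),
    Unitary.map_mem _ (Unitary.linearIsometryEquiv.symm e).2,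
    toEuclideanLin.injective (LinearMap.ext fun v => ?_)⟩
  rw [toLpLin_mul_same, LinearMap.comp_apply, ← coe_toEuclideanCLM_eq_toEuclideanLin]
  simpa [e] using hW v

end Matrix

theorem ptraceR_outer_vec {A B : Type*} [Fintype A] (X : Matrix A B ℂ) :
    ptraceR (outer X.vec) = (Xᴴ * X)ᵀ := by
  ext b b'
  simp only [ptraceR, outer, vec, transpose_apply, mul_apply, conjTranspose_apply]
  exact Finset.sum_congr rfl fun _ _ => mul_comm _ _

theorem stmt5_general {B A : Type*} [Fintype B] [Fintype A] [DecidableEq B] [DecidableEq A]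
    (ψ φ : B × A → ℂ)
    (h : ptraceR (outer ψ) = ptraceR (outer φ)) :
    ∃ U : Matrix A A ℂ, U ∈ Matrix.unitaryGroup A ℂ ∧
      ((1 : Matrix B B ℂ) ⊗ₖ U) *ᵥ ψ = φ := by
  let X : Matrix A B ℂ := (of (Function.curry ψ))ᵀ
  let Y : Matrix A B ℂ := (of (Function.curry φ))ᵀ
  have hXY : Xᴴ * X = Yᴴ * Y :=
    transpose_injective (by rw [← ptraceR_outer_vec, ← ptraceR_outer_vec]; exact h)
  obtain ⟨U, hU, hUX⟩ := exists_mem_unitaryGroup_mul_eq_of_conjTranspose_mul_self_eq hXY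
  exact ⟨U, hU, by rw [show ψ = X.vec from rfl, ← vec_mul_eq_mulVec, hUX]; rfl⟩

/-- Uniqueness of purification up to a local unitary on the ancilla:
if two unit vectors `ψ, φ ∈ ℂ^{B×A}` have the same reduced state on `B`, then
`φ = (1_B ⊗ U) ψ` for some unitary `U` on `ℂ^A`. -/
theorem stmt5 {B A : Type*} [Fintype B] [Fintype A] [DecidableEq B] [DecidableEq A]
    [Nonempty B] [Nonempty A]
    (ψ φ : B × A → ℂ) (hψ : star ψ ⬝ᵥ ψ = 1) (hφ : star φ ⬝ᵥ φ = 1)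
    (h : ptraceR (outer ψ) = ptraceR (outer φ)) :
    ∃ U : Matrix A A ℂ, U ∈ Matrix.unitaryGroup A ℂ ∧
      ((1 : Matrix B B ℂ) ⊗ₖ U) *ᵥ ψ = φ :=
  stmt5_general ψ φ h
end

section
/- (Invariance of classical correlations under local unitaries on the measured party) Let S, A be nonempty finite types, let ρ be a density matrix indexed by (S×A)×(S×A), let 1 ≤ d ≤ |S|, and let U be a unitary matrix on ℂ^A. Then C^(d)_{S|A}((1_S ⊗ U) ρ (1_S ⊗ U)^†) = C^(d)_{S|A}(ρ). -/
open Matrix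
open scoped ComplexOrder Kronecker Classical

section stmt6Aux
set_option linter.unusedSectionVars false

lemma stmt6_kron_conjT {S A : Type*} (B : Matrix S S ℂ) (C : Matrix A A ℂ) :
    (B ⊗ₖ C)ᴴ = Bᴴ ⊗ₖ Cᴴ := by
  ext ⟨i,j⟩ ⟨k,l⟩
  simp [conjTranspose_apply, kroneckerMap_apply]

lemma stmt6_kron_mul_apply {S A : Type*} [Fintype S] [Fintype A] [DecidableEq S]
    (V : Matrix A A ℂ) (X : Matrix (S × A) (S × A) ℂ) (s : S) (a : A) (q : S × A) :
    (((1 : Matrix S S ℂ) ⊗ₖ V) * X) (s, a) q = ∑ b, V a b * X (s, b) q := by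
  rw [mul_apply, Fintype.sum_prod_type, Finset.sum_comm]
  simp [one_apply, ite_mul, kroneckerMap_apply]

lemma stmt6_mul_kron_apply {S A : Type*} [Fintype S] [Fintype A] [DecidableEq S]
    (V : Matrix A A ℂ) (X : Matrix (S × A) (S × A) ℂ) (p : S × A) (s' : S) (a : A) :
    (X * ((1 : Matrix S S ℂ) ⊗ₖ V)) p (s', a) = ∑ b, X p (s', b) * V b a := by
  rw [mul_apply, Fintype.sum_prod_type, Finset.sum_comm]
  simp [one_apply, mul_ite, kroneckerMap_apply]

lemma stmt6_ptraceR_kron_comm {S A : Type*} [Fintype S] [Fintype A] [DecidableEq S]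
    (V : Matrix A A ℂ) (X : Matrix (S × A) (S × A) ℂ) :
    ptraceR (((1 : Matrix S S ℂ) ⊗ₖ V) * X) = ptraceR (X * ((1 : Matrix S S ℂ) ⊗ₖ V)) := by
  ext s s'
  simp only [ptraceR, stmt6_kron_mul_apply, stmt6_mul_kron_apply]
  rw [Finset.sum_comm]
  exact Finset.sum_congr rfl fun a _ => Finset.sum_congr rfl fun b _ => mul_comm _ _

variable {S A : Type*} [Fintype S] [Fintype A] [DecidableEq S] [DecidableEq A]
variable {U : Matrix A A ℂ} (hU : U ∈ Matrix.unitaryGroup A ℂ)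

lemma stmt6_Vconj : ((1 : Matrix S S ℂ) ⊗ₖ U)ᴴ = (1 : Matrix S S ℂ) ⊗ₖ Uᴴ := by
  rw [stmt6_kron_conjT, conjTranspose_one]

include hU

lemma stmt6_VHV : ((1 : Matrix S S ℂ) ⊗ₖ U)ᴴ * ((1 : Matrix S S ℂ) ⊗ₖ U) = 1 := by
  rw [stmt6_Vconj, ← mul_kronecker_mul, one_mul, ← Matrix.star_eq_conjTranspose, hU.1,
    one_kronecker_one]

lemma stmt6_VVH : ((1 : Matrix S S ℂ) ⊗ₖ U) * ((1 : Matrix S S ℂ) ⊗ₖ U)ᴴ = 1 := by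
  rw [stmt6_Vconj, ← mul_kronecker_mul, one_mul, ← Matrix.star_eq_conjTranspose, hU.2,
    one_kronecker_one]

lemma stmt6_ptraceR_conj (X : Matrix (S × A) (S × A) ℂ) :
    ptraceR (((1 : Matrix S S ℂ) ⊗ₖ U) * X * ((1 : Matrix S S ℂ) ⊗ₖ U)ᴴ) = ptraceR X := by
  rw [Matrix.mul_assoc, stmt6_ptraceR_kron_comm, Matrix.mul_assoc, stmt6_Vconj (U := U),
    ← mul_kronecker_mul, one_mul, ← Matrix.star_eq_conjTranspose, hU.1,
    one_kronecker_one, Matrix.mul_one]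

lemma stmt6_trace_conj (X : Matrix (S × A) (S × A) ℂ) :
    (((1 : Matrix S S ℂ) ⊗ₖ U) * X * ((1 : Matrix S S ℂ) ⊗ₖ U)ᴴ).trace = X.trace := by
  rw [Matrix.trace_mul_cycle, stmt6_VHV hU, Matrix.one_mul]

lemma stmt6_conj_move (ρ : Matrix (S × A) (S × A) ℂ) (N : Matrix A A ℂ) :
    ((1 : Matrix S S ℂ) ⊗ₖ (U * N * Uᴴ)) *
      (((1 : Matrix S S ℂ) ⊗ₖ U) * ρ * ((1 : Matrix S S ℂ) ⊗ₖ U)ᴴ) =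
    ((1 : Matrix S S ℂ) ⊗ₖ U) * (((1 : Matrix S S ℂ) ⊗ₖ N) * ρ) *
      ((1 : Matrix S S ℂ) ⊗ₖ U)ᴴ := by
  have h1 : ((1 : Matrix S S ℂ) ⊗ₖ (U * N * Uᴴ)) =
      ((1 : Matrix S S ℂ) ⊗ₖ U) * ((1 : Matrix S S ℂ) ⊗ₖ N) * ((1 : Matrix S S ℂ) ⊗ₖ U)ᴴ := by
    rw [stmt6_Vconj, ← mul_kronecker_mul, ← mul_kronecker_mul, one_mul, one_mul]
  rw [h1]
  simp only [Matrix.mul_assoc]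
  rw [← Matrix.mul_assoc (((1 : Matrix S S ℂ) ⊗ₖ U)ᴴ) (((1 : Matrix S S ℂ) ⊗ₖ U)),
    stmt6_VHV hU, Matrix.one_mul]

lemma stmt6_term_eq (ρ : Matrix (S × A) (S × A) ℂ) (N : Matrix A A ℂ) (d : ℕ) :
    (if (((1 : Matrix S S ℂ) ⊗ₖ (U * N * Uᴴ)) *
          (((1 : Matrix S S ℂ) ⊗ₖ U) * ρ * ((1 : Matrix S S ℂ) ⊗ₖ U)ᴴ)).trace = 0 then 0
     else ((((1 : Matrix S S ℂ) ⊗ₖ (U * N * Uᴴ)) *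
          (((1 : Matrix S S ℂ) ⊗ₖ U) * ρ * ((1 : Matrix S S ℂ) ⊗ₖ U)ᴴ)).trace).re *
       epsD (((((1 : Matrix S S ℂ) ⊗ₖ (U * N * Uᴴ)) *
          (((1 : Matrix S S ℂ) ⊗ₖ U) * ρ * ((1 : Matrix S S ℂ) ⊗ₖ U)ᴴ)).trace)⁻¹ •
         ptraceR (((1 : Matrix S S ℂ) ⊗ₖ (U * N * Uᴴ)) *
          (((1 : Matrix S S ℂ) ⊗ₖ U) * ρ * ((1 : Matrix S S ℂ) ⊗ₖ U)ᴴ))) d) =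
    (if (((1 : Matrix S S ℂ) ⊗ₖ N) * ρ).trace = 0 then 0
     else ((((1 : Matrix S S ℂ) ⊗ₖ N) * ρ).trace).re *
       epsD (((((1 : Matrix S S ℂ) ⊗ₖ N) * ρ).trace)⁻¹ •
         ptraceR (((1 : Matrix S S ℂ) ⊗ₖ N) * ρ)) d) := by
  rw [stmt6_conj_move hU, stmt6_trace_conj hU, stmt6_ptraceR_conj hU]

end stmt6Aux

/-- Invariance of classical correlations under local unitaries on the
measured party: for a density matrix `ρ` on `(S×A)×(S×A)`, `1 ≤ d ≤ |S|`, and a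
unitary `U` on `ℂ^A`, `C^(d)_{S|A}((1_S ⊗ U) ρ (1_S ⊗ U)†) = C^(d)_{S|A}(ρ)`. -/
theorem stmt6 {S A : Type*} [Fintype S] [Fintype A] [DecidableEq S] [DecidableEq A]
    [Nonempty S] [Nonempty A]
    (ρ : Matrix (S × A) (S × A) ℂ) (hρ : ρ.PosSemidef) (htr : ρ.trace = 1)
    (d : ℕ) (hd1 : 1 ≤ d) (hdn : d ≤ Fintype.card S)
    (U : Matrix A A ℂ) (hU : U ∈ Matrix.unitaryGroup A ℂ) :
    classC d (((1 : Matrix S S ℂ) ⊗ₖ U) * ρ * ((1 : Matrix S S ℂ) ⊗ₖ U)ᴴ) =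
      classC d ρ := by
  have hUUH : U * Uᴴ = 1 := by rw [← Matrix.star_eq_conjTranspose]; exact hU.2
  have hUHU : Uᴴ * U = 1 := by rw [← Matrix.star_eq_conjTranspose]; exact hU.1
  unfold classC
  rw [stmt6_ptraceR_conj hU]
  congr 2
  ext e
  simp only [Set.mem_setOf_eq]
  constructor
  · rintro ⟨m, M, hpsd, hsum, he⟩
    refine ⟨m, fun x => Uᴴ * M x * U,
      fun x => (hpsd x).conjTranspose_mul_mul_same U, ?_, ?_⟩
    · rw [← Finset.sum_mul, ← Finset.mul_sum, hsum, Matrix.mul_one, hUHU]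
    · rw [he]
      refine Finset.sum_congr rfl fun x _ => ?_
      have hMx : M x = U * (Uᴴ * M x * U) * Uᴴ := by
        rw [show U * (Uᴴ * M x * U) * Uᴴ = (U * Uᴴ) * (M x * (U * Uᴴ)) by
          simp only [Matrix.mul_assoc], hUUH, Matrix.one_mul, Matrix.mul_one]
      conv_lhs => rw [hMx]
      exact stmt6_term_eq hU ρ (Uᴴ * M x * U) d
  · rintro ⟨m, M, hpsd, hsum, he⟩
    refine ⟨m, fun x => U * M x * Uᴴ,
      fun x => (hpsd x).mul_mul_conjTranspose_same U, ?_, ?_⟩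
    · rw [← Finset.sum_mul, ← Finset.mul_sum, hsum, Matrix.mul_one, hUUH]
    · rw [he]
      exact Finset.sum_congr rfl fun x _ => (stmt6_term_eq hU ρ (M x) d).symm
end

section
/- (Classical correlations are independent of the purification) Let S, R, A be nonempty finite types, let ψ, φ ∈ ℂ^{S×R×A} be unit vectors such that tr_A |ψ⟩⟨ψ| = tr_A |φ⟩⟨φ|, and let 1 ≤ d ≤ |S|. Then C^(d)_{S|A}(tr_R |ψ⟩⟨ψ|) = C^(d)_{S|A}(tr_R |φ⟩⟨φ|). -/
open Matrix
open scoped ComplexOrder Kronecker Classical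

/-! Write `ψ_p, φ_p ∈ ℂ^A` for the slices of the two purifications at `p ∈ S × R`. The hypothesis
says that these two families have the same Gram matrix, so some unitary `U` on `A` maps `ψ_p` to
`φ_p` for every `p`; consequently `tr_R |φ⟩⟨φ| = (1 ⊗ U) tr_R |ψ⟩⟨ψ| (1 ⊗ U)†`. Classical
correlations are invariant under such a local unitary: `M ↦ U† M U` is a bijection of POVMs on `A`,
and because the partial trace over `A` is cyclic for operators acting on `A`, it leaves every
outcome probability and every post-measurement state on `S` unchanged. -/

section LinearIsometry

variable {𝕜 M E : Type*} [RCLike 𝕜] [AddCommGroup M] [Module 𝕜 M]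
  [NormedAddCommGroup E] [InnerProductSpace 𝕜 E] [FiniteDimensional 𝕜 E]

theorem LinearMap.exists_linearIsometry_comp_eq_of_norm_eq_s7 (K₁ K₂ : M →ₗ[𝕜] E)
    (h : ∀ x, ‖K₁ x‖ = ‖K₂ x‖) : ∃ f : E →ₗᵢ[𝕜] E, ∀ x, f (K₁ x) = K₂ x := by
  have hker : LinearMap.ker K₁ ≤ LinearMap.ker K₂ := fun x hx => by
    rw [LinearMap.mem_ker, ← norm_eq_zero, ← h, norm_eq_zero, ← LinearMap.mem_ker]
    exact hx
  let L : LinearMap.range K₁ →ₗ[𝕜] E :=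
    (LinearMap.ker K₁).liftQ K₂ hker ∘ₗ K₁.quotKerEquivRange.symm.toLinearMap
  have hL : ∀ x, L ⟨K₁ x, LinearMap.mem_range_self K₁ x⟩ = K₂ x := fun x => by
    simp [L, LinearMap.quotKerEquivRange_symm_apply_image]
  have hL_norm : ∀ y, ‖L y‖ = ‖y‖ := by
    rintro ⟨_, x, rfl⟩
    rw [hL, ← h]
    rfl
  exact ⟨LinearIsometry.extend ⟨L, hL_norm⟩, fun x =>
    (LinearIsometry.extend_apply _ ⟨K₁ x, LinearMap.mem_range_self K₁ x⟩).trans (hL x)⟩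

theorem exists_linearIsometry_apply_eq_of_gram_eq {ι : Type*} [Fintype ι] {v w : ι → E}
    (h : Matrix.gram 𝕜 v = Matrix.gram 𝕜 w) : ∃ f : E →ₗᵢ[𝕜] E, ∀ i, f (v i) = w i := by
  have hnorm : ∀ c : ι → 𝕜,
      ‖Fintype.linearCombination 𝕜 v c‖ = ‖Fintype.linearCombination 𝕜 w c‖ := fun c => by
    have := Matrix.star_dotProduct_gram_mulVec v c c
    rw [h, Matrix.star_dotProduct_gram_mulVec] at this
    simp only [@norm_eq_sqrt_re_inner 𝕜, Fintype.linearCombination_apply, this]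
  obtain ⟨f, hf⟩ := LinearMap.exists_linearIsometry_comp_eq_of_norm_eq_s7 _ _ hnorm
  exact ⟨f, fun i => by simpa [Fintype.linearCombination_apply_single] using hf (Pi.single i 1)⟩

end LinearIsometry

set_option synthInstance.maxHeartbeats 100000 in
theorem LinearIsometry.toEuclideanCLM_symm_mem_unitaryGroup {𝕜 n : Type*} [RCLike 𝕜] [Fintype n]
    [DecidableEq n] (f : EuclideanSpace 𝕜 n →ₗᵢ[𝕜] EuclideanSpace 𝕜 n) :
    (toEuclideanCLM (n := n) (𝕜 := 𝕜)).symm f.toContinuousLinearMap ∈ unitaryGroup n 𝕜 := by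
  rw [mem_unitaryGroup_iff', ← map_star, ← map_mul, ContinuousLinearMap.star_eq_adjoint,
    ContinuousLinearMap.mul_def, f.adjoint_comp_self, map_one]

theorem Matrix.exists_mem_unitaryGroup_mulVec_eq_of_star_dotProduct_eq {𝕜 ι n : Type*}
    [RCLike 𝕜] [Fintype ι] [Fintype n] [DecidableEq n] {v w : ι → n → 𝕜}
    (h : ∀ i j, star (v i) ⬝ᵥ v j = star (w i) ⬝ᵥ w j) :
    ∃ U ∈ unitaryGroup n 𝕜, ∀ i, U *ᵥ v i = w i := by
  have hgram : gram 𝕜 (fun i => WithLp.toLp 2 (v i)) = gram 𝕜 (fun i => WithLp.toLp 2 (w i)) := by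
    ext i j
    simp only [gram_apply, EuclideanSpace.inner_toLp_toLp]
    rw [dotProduct_comm, h, dotProduct_comm]
  obtain ⟨f, hf⟩ := exists_linearIsometry_apply_eq_of_gram_eq hgram
  refine ⟨_, f.toEuclideanCLM_symm_mem_unitaryGroup, fun i => ?_⟩
  rw [← ofLp_toEuclideanCLM]
  simp [hf]

theorem outer_mulVec {m n : Type*} [Fintype n] (M : Matrix m n ℂ) (v : n → ℂ) :
    outer (M *ᵥ v) = M * outer v * Mᴴ := by
  change vecMulVec (M *ᵥ v) (star (M *ᵥ v)) = M * vecMulVec v (star v) * Mᴴ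
  rw [mul_vecMulVec, vecMulVec_mul, star_mulVec]

section PartialTrace

variable {S R A : Type*}

theorem ptrace2_outer [Fintype R] (ψ : S × R × A → ℂ) :
    ptrace2 (outer ψ) = ∑ r, outer (fun p : S × A => ψ (p.1, r, p.2)) := by
  ext p q
  simp [ptrace2, outer, Matrix.sum_apply]

theorem one_kronecker_mulVec_apply [Fintype S] [Fintype A] [DecidableEq S] (U : Matrix A A ℂ)
    (χ : S × A → ℂ) (s : S) (a : A) :
    ((1 : Matrix S S ℂ) ⊗ₖ U *ᵥ χ) (s, a) = (U *ᵥ fun b => χ (s, b)) a := by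
  simp [mulVec, dotProduct, Fintype.sum_prod_type, one_apply, ite_mul]

theorem ptrace2_outer_of_mulVec_eq [Fintype S] [Fintype R] [Fintype A] [DecidableEq S]
    {ψ φ : S × R × A → ℂ} {U : Matrix A A ℂ}
    (hU : ∀ s r, U *ᵥ (fun a => ψ (s, r, a)) = fun a => φ (s, r, a)) :
    ptrace2 (outer φ) = (1 ⊗ₖ U) * ptrace2 (outer ψ) * (1 ⊗ₖ U)ᴴ := by
  have hφ : ∀ r, (fun p : S × A => φ (p.1, r, p.2)) =
      (1 : Matrix S S ℂ) ⊗ₖ U *ᵥ fun p => ψ (p.1, r, p.2) := fun r => by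
    ext ⟨s, a⟩
    rw [one_kronecker_mulVec_apply, hU]
  simp only [ptrace2_outer, hφ, outer_mulVec, Finset.mul_sum, Finset.sum_mul]

theorem trace_ptraceR [Fintype S] [Fintype A] (X : Matrix (S × A) (S × A) ℂ) :
    (ptraceR X).trace = X.trace := by
  simp [trace, ptraceR, Fintype.sum_prod_type]

theorem ptraceR_mul_one_kronecker [Fintype S] [Fintype A] [DecidableEq S]
    (X : Matrix (S × A) (S × A) ℂ) (C : Matrix A A ℂ) :
    ptraceR (X * ((1 : Matrix S S ℂ) ⊗ₖ C)) = ptraceR (((1 : Matrix S S ℂ) ⊗ₖ C) * X) := by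
  ext s s'
  simp only [ptraceR, mul_apply, kroneckerMap_apply, one_apply, ite_mul, one_mul, zero_mul,
    mul_ite, mul_zero, Fintype.sum_prod_type, Finset.sum_ite_irrel, Finset.sum_const_zero,
    Finset.sum_ite_eq', Finset.mem_univ, ↓reduceIte, Finset.sum_ite_eq]
  rw [Finset.sum_comm]
  simp only [mul_comm]

end PartialTrace

theorem classC_one_kronecker_conj {S A : Type*} [Fintype S] [Fintype A] [DecidableEq S]
    [DecidableEq A] (d : ℕ) (ρ : Matrix (S × A) (S × A) ℂ) {U : Matrix A A ℂ}
    (hU : U ∈ unitaryGroup A ℂ) :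
    classC d ((1 ⊗ₖ U) * ρ * (1 ⊗ₖ U)ᴴ) = classC d ρ := by
  have hUU : Uᴴ * U = 1 := mem_unitaryGroup_iff'.mp hU
  have hUU' : U * Uᴴ = 1 := mem_unitaryGroup_iff.mp hU
  have key : ∀ M : Matrix A A ℂ, ptraceR ((1 ⊗ₖ M) * ((1 ⊗ₖ U) * ρ * (1 ⊗ₖ U)ᴴ)) =
      ptraceR (((1 : Matrix S S ℂ) ⊗ₖ (Uᴴ * M * U)) * ρ) := fun M => by
    rw [conjTranspose_kronecker, conjTranspose_one, ← mul_assoc, ← mul_assoc,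
      ← mul_kronecker_mul, one_mul, ptraceR_mul_one_kronecker, ← mul_assoc,
      ← mul_kronecker_mul, one_mul, ← mul_assoc]
  have hρ : ptraceR ((1 ⊗ₖ U) * ρ * (1 ⊗ₖ U)ᴴ) = ptraceR ρ := by
    simpa [hUU] using key 1
  unfold classC
  rw [hρ]
  congr 2
  ext e
  constructor
  · rintro ⟨m, M, hM, hsum, rfl⟩
    refine ⟨m, fun x => Uᴴ * M x * U, fun x => (hM x).conjTranspose_mul_mul_same U, ?_, ?_⟩
    · rw [← Finset.sum_mul, ← Finset.mul_sum, hsum, mul_one, hUU]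
    · simp only [← trace_ptraceR, key]
  · rintro ⟨m, N, hN, hsum, rfl⟩
    refine ⟨m, fun x => U * N x * Uᴴ, fun x => (hN x).mul_mul_conjTranspose_same U, ?_, ?_⟩
    · rw [← Finset.sum_mul, ← Finset.mul_sum, hsum, mul_one, hUU']
    · have hUNU : ∀ x, Uᴴ * (U * N x * Uᴴ) * U = N x := fun x => by
        simp only [mul_assoc, hUU, mul_one, ← mul_assoc Uᴴ U, one_mul]
      simp only [← trace_ptraceR, key, hUNU]

theorem stmt7_general {S R A : Type*} [Fintype S] [Fintype R] [Fintype A]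
    [DecidableEq S] [DecidableEq A]
    (ψ φ : S × R × A → ℂ)
    (h : ptrace3 (outer ψ) = ptrace3 (outer φ))
    (d : ℕ) :
    classC d (ptrace2 (outer ψ)) = classC d (ptrace2 (outer φ)) := by
  have hgram : ∀ p q : S × R, star (fun a => ψ (p.1, p.2, a)) ⬝ᵥ (fun a => ψ (q.1, q.2, a)) =
      star (fun a => φ (p.1, p.2, a)) ⬝ᵥ (fun a => φ (q.1, q.2, a)) := fun p q => by
    have := congrFun (congrFun h q) p
    simp only [ptrace3, outer] at this
    simp only [dotProduct, Pi.star_apply, mul_comm (star _), this]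
  obtain ⟨U, hU, hUψ⟩ := exists_mem_unitaryGroup_mulVec_eq_of_star_dotProduct_eq hgram
  rw [ptrace2_outer_of_mulVec_eq fun s r => hUψ (s, r), classC_one_kronecker_conj d _ hU]

/-- Classical correlations are independent of the purification:
if two unit vectors `ψ, φ ∈ ℂ^{S×R×A}` satisfy `tr_A |ψ⟩⟨ψ| = tr_A |φ⟩⟨φ|`, then
`C^(d)_{S|A}(tr_R |ψ⟩⟨ψ|) = C^(d)_{S|A}(tr_R |φ⟩⟨φ|)` for `1 ≤ d ≤ |S|`. -/
theorem stmt7 {S R A : Type*} [Fintype S] [Fintype R] [Fintype A]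
    [DecidableEq S] [DecidableEq R] [DecidableEq A]
    [Nonempty S] [Nonempty R] [Nonempty A]
    (ψ φ : S × R × A → ℂ) (hψ : star ψ ⬝ᵥ ψ = 1) (hφ : star φ ⬝ᵥ φ = 1)
    (h : ptrace3 (outer ψ) = ptrace3 (outer φ))
    (d : ℕ) (hd1 : 1 ≤ d) (hdn : d ≤ Fintype.card S) :
    classC d (ptrace2 (outer ψ)) = classC d (ptrace2 (outer φ)) :=
  stmt7_general ψ φ h d
end

section
/- (Classical correlations vanish on product states) Let S, A be nonempty finite types, let σ be a density matrix indexed by S×S and τ a density matrix indexed by A×A, and let 1 ≤ d ≤ |S|. Then C^(d)_{S|A}(σ ⊗ τ) = 0. -/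
open Matrix
open scoped ComplexOrder Kronecker Classical

lemma ptraceR_kron {S A : Type*} [Fintype A] (M : Matrix S S ℂ) (N : Matrix A A ℂ) :
    ptraceR (M ⊗ₖ N) = N.trace • M := by
  funext s s'
  simp only [ptraceR, kroneckerMap_apply, Matrix.smul_apply, Matrix.trace, Matrix.diag,
    smul_eq_mul, Finset.sum_mul]
  exact Finset.sum_congr rfl fun a _ => mul_comm _ _

/-- Classical correlations vanish on product states: for density
matrices `σ` on `S×S` and `τ` on `A×A`, and `1 ≤ d ≤ |S|`, `C^(d)_{S|A}(σ ⊗ τ) = 0`. -/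
theorem stmt10 {S A : Type*} [Fintype S] [Fintype A] [DecidableEq S] [DecidableEq A]
    [Nonempty S] [Nonempty A]
    (σ : Matrix S S ℂ) (hσ : σ.PosSemidef) (hσtr : σ.trace = 1)
    (τ : Matrix A A ℂ) (hτ : τ.PosSemidef) (hτtr : τ.trace = 1)
    (d : ℕ) (hd1 : 1 ≤ d) (hdn : d ≤ Fintype.card S) :
    classC d (σ ⊗ₖ τ) = 0 := by
  have hρ : ptraceR (σ ⊗ₖ τ) = σ := by rw [ptraceR_kron, hτtr, one_smul]
  -- key simplifications for a general POVM element
  have hmul : ∀ M : Matrix A A ℂ,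
      ((1 : Matrix S S ℂ) ⊗ₖ M) * (σ ⊗ₖ τ) = σ ⊗ₖ (M * τ) := by
    intro M; rw [← Matrix.mul_kronecker_mul, Matrix.one_mul]
  have htr : ∀ M : Matrix A A ℂ,
      (((1 : Matrix S S ℂ) ⊗ₖ M) * (σ ⊗ₖ τ)).trace = (M * τ).trace := by
    intro M; rw [hmul, Matrix.trace_kronecker, hσtr, one_mul]
  have hterm : ∀ M : Matrix A A ℂ,
      (if (((1 : Matrix S S ℂ) ⊗ₖ M) * (σ ⊗ₖ τ)).trace = 0 then (0 : ℝ)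
       else ((((1 : Matrix S S ℂ) ⊗ₖ M) * (σ ⊗ₖ τ)).trace).re *
         epsD (((((1 : Matrix S S ℂ) ⊗ₖ M) * (σ ⊗ₖ τ)).trace)⁻¹ •
           ptraceR (((1 : Matrix S S ℂ) ⊗ₖ M) * (σ ⊗ₖ τ))) d)
      = ((M * τ).trace).re * epsD σ d := by
    intro M
    rw [htr M]
    by_cases h : (M * τ).trace = 0
    · simp [h]
    · rw [if_neg h]
      congr 1
      rw [hmul, ptraceR_kron, smul_smul, inv_mul_cancel₀ h, one_smul]
  have hset : { e : ℝ | ∃ (m : ℕ) (M : Fin m → Matrix A A ℂ),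
      (∀ x, (M x).PosSemidef) ∧ (∑ x, M x = 1) ∧
      e = ∑ x,
        (if (((1 : Matrix S S ℂ) ⊗ₖ M x) * (σ ⊗ₖ τ)).trace = 0 then 0
         else ((((1 : Matrix S S ℂ) ⊗ₖ M x) * (σ ⊗ₖ τ)).trace).re *
           epsD (((((1 : Matrix S S ℂ) ⊗ₖ M x) * (σ ⊗ₖ τ)).trace)⁻¹ •
             ptraceR (((1 : Matrix S S ℂ) ⊗ₖ M x) * (σ ⊗ₖ τ))) d) }
      = {epsD σ d} := by
    ext e
    simp only [Set.mem_setOf_eq, Set.mem_singleton_iff]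
    constructor
    · rintro ⟨m, M, hpsd, hsum, rfl⟩
      have : ∀ x, (if (((1 : Matrix S S ℂ) ⊗ₖ M x) * (σ ⊗ₖ τ)).trace = 0 then (0:ℝ)
          else ((((1 : Matrix S S ℂ) ⊗ₖ M x) * (σ ⊗ₖ τ)).trace).re *
            epsD (((((1 : Matrix S S ℂ) ⊗ₖ M x) * (σ ⊗ₖ τ)).trace)⁻¹ •
              ptraceR (((1 : Matrix S S ℂ) ⊗ₖ M x) * (σ ⊗ₖ τ))) d)
          = ((M x * τ).trace).re * epsD σ d := fun x => hterm (M x)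
      rw [Finset.sum_congr rfl fun x _ => this x, ← Finset.sum_mul]
      have : ∑ x, ((M x * τ).trace).re = 1 := by
        have : (∑ x, (M x * τ).trace) = 1 := by
          rw [← Matrix.trace_sum, ← Finset.sum_mul, hsum, Matrix.one_mul, hτtr]
        calc ∑ x, ((M x * τ).trace).re = (∑ x, (M x * τ).trace).re := by
              rw [Complex.re_sum]
          _ = 1 := by rw [this]; rfl
      rw [this, one_mul]
    · rintro rfl
      refine ⟨1, fun _ => (1 : Matrix A A ℂ), fun _ => Matrix.PosSemidef.one, by
        simp, ?_⟩
      rw [Fin.sum_univ_one, hterm, Matrix.one_mul, hτtr]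
      simp [hρ]
  unfold classC
  rw [hρ, hset, csInf_singleton, sub_self]
end

section
/- (Parity lemma for twofold-degenerate ground spaces) Let S, R be nonempty finite types. Let U_S, V_S be unitary matrices on ℂ^S and U_R, V_R unitary matrices on ℂ^R, and set U = U_S ⊗ U_R and V = V_S ⊗ V_R. Let Π be an orthogonal projection matrix on ℂ^S with U_S Π U_S^† = Π and V_S Π V_S^† = Π. Let ψ_+ ∈ ℂ^{S×R} be a unit vector with U ψ_+ = ψ_+, set ψ_- = V ψ_+, and assume U ψ_- = −ψ_-. Then for all a, b ∈ ℂ with |a|² + |b|² = 1, the vector ψ = a ψ_+ + b ψ_- satisfies ⟨ψ, (Π ⊗ 1_R) ψ⟩ = ⟨ψ_+, (Π ⊗ 1_R) ψ_+⟩; in particular the frustration 1 − ⟨ψ, (Π ⊗ 1_R) ψ⟩ is the same for every pure state in the span of ψ_+ and ψ_-. -/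
/-! The operator `Q = P ⊗ 1` commutes with `U` and `V`, so both preserve the form
`⟨x, Q y⟩`. Invariance under `V` gives `⟨ψ₋, Q ψ₋⟩ = ⟨ψ₊, Q ψ₊⟩`. Invariance under `U`, for
which `ψ₊` and `ψ₋` are eigenvectors with eigenvalues `1` and `-1`, gives
`⟨ψ₊, Q ψ₋⟩ = -⟨ψ₊, Q ψ₋⟩`, so the cross terms vanish and the expectation value of `Q` in
`a ψ₊ + b ψ₋` is `(|a|² + |b|²) ⟨ψ₊, Q ψ₊⟩`. -/

open Matrix
open scoped ComplexOrder Kronecker Classical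

namespace Matrix

variable {m n α : Type*} [Fintype m] [Fintype n]

lemma kronecker_mul_kronecker_one_mul_conjTranspose [DecidableEq n] [CommRing α] [StarRing α]
    {A M : Matrix m m α} {B : Matrix n n α} (hAM : A * M * Aᴴ = M)
    (hB : B ∈ unitaryGroup n α) :
    (A ⊗ₖ B) * (M ⊗ₖ (1 : Matrix n n α)) * (A ⊗ₖ B)ᴴ = M ⊗ₖ (1 : Matrix n n α) := by
  rw [conjTranspose_kronecker, ← mul_kronecker_mul, ← mul_kronecker_mul, hAM, Matrix.mul_one,
    ← star_eq_conjTranspose, Unitary.mul_star_self_of_mem hB]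

lemma star_mulVec_dotProduct_mulVec_mulVec_of_conj_eq [DecidableEq n] [CommRing α] [StarRing α]
    {W M : Matrix n n α} (hW : W ∈ unitaryGroup n α) (hWM : W * M * Wᴴ = M) (x y : n → α) :
    star (W *ᵥ x) ⬝ᵥ (M *ᵥ (W *ᵥ y)) = star x ⬝ᵥ (M *ᵥ y) := by
  have hWW : Wᴴ * W = 1 := Unitary.star_mul_self_of_mem hW
  have hM : Wᴴ * M * W = M := by
    nth_rw 1 [← hWM]
    simp only [Matrix.mul_assoc, hWW, Matrix.mul_one]
    rw [← Matrix.mul_assoc, hWW, Matrix.one_mul]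
  rw [star_mulVec, ← dotProduct_mulVec, mulVec_mulVec, mulVec_mulVec, hM]

lemma star_dotProduct_mulVec_eq_zero_of_mulVec_eq_neg [DecidableEq n] [CommRing α]
    [NoZeroDivisors α] [CharZero α] [StarRing α]
    {W M : Matrix n n α} (hW : W ∈ unitaryGroup n α) (hWM : W * M * Wᴴ = M) {x y : n → α}
    (hx : W *ᵥ x = x) (hy : W *ᵥ y = -y) :
    star x ⬝ᵥ (M *ᵥ y) = 0 ∧ star y ⬝ᵥ (M *ᵥ x) = 0 := by
  have hxy := star_mulVec_dotProduct_mulVec_mulVec_of_conj_eq hW hWM x y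
  have hyx := star_mulVec_dotProduct_mulVec_mulVec_of_conj_eq hW hWM y x
  rw [hx, hy, mulVec_neg, dotProduct_neg, neg_eq_iff_add_eq_zero, ← two_mul] at hxy
  rw [hx, hy, star_neg, neg_dotProduct, neg_eq_iff_add_eq_zero, ← two_mul] at hyx
  exact ⟨(mul_eq_zero.mp hxy).resolve_left two_ne_zero,
    (mul_eq_zero.mp hyx).resolve_left two_ne_zero⟩

lemma star_smul_add_smul_dotProduct_mulVec {𝕜 : Type*} [RCLike 𝕜] {M : Matrix n n 𝕜}
    {x y : n → 𝕜} (hxy : star x ⬝ᵥ (M *ᵥ y) = 0) (hyx : star y ⬝ᵥ (M *ᵥ x) = 0)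
    (hyy : star y ⬝ᵥ (M *ᵥ y) = star x ⬝ᵥ (M *ᵥ x)) {a b : 𝕜} (hab : ‖a‖ ^ 2 + ‖b‖ ^ 2 = 1) :
    star (a • x + b • y) ⬝ᵥ (M *ᵥ (a • x + b • y)) = star x ⬝ᵥ (M *ᵥ x) := by
  have hab' : star a * a + star b * b = 1 := by
    simp only [RCLike.star_def, RCLike.conj_mul]
    exact_mod_cast hab
  simp only [star_add, star_smul, mulVec_add, mulVec_smul, add_dotProduct, dotProduct_add,
    smul_dotProduct, dotProduct_smul, smul_eq_mul, hxy, hyx, hyy]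
  linear_combination (star x ⬝ᵥ (M *ᵥ x)) * hab'

end Matrix

theorem stmt14_general {S R : Type*} [Fintype S] [Fintype R] [DecidableEq S] [DecidableEq R]
    (US VS : Matrix S S ℂ) (UR VR : Matrix R R ℂ)
    (hUS : US ∈ Matrix.unitaryGroup S ℂ) (hVS : VS ∈ Matrix.unitaryGroup S ℂ)
    (hUR : UR ∈ Matrix.unitaryGroup R ℂ) (hVR : VR ∈ Matrix.unitaryGroup R ℂ)
    (P : Matrix S S ℂ)
    (hUP : US * P * USᴴ = P) (hVP : VS * P * VSᴴ = P)
    (ψp : S × R → ℂ)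
    (hU : (US ⊗ₖ UR) *ᵥ ψp = ψp)
    (ψm : S × R → ℂ) (hψm : ψm = (VS ⊗ₖ VR) *ᵥ ψp)
    (hUm : (US ⊗ₖ UR) *ᵥ ψm = -ψm)
    (a b : ℂ) (hab : ‖a‖ ^ 2 + ‖b‖ ^ 2 = 1) :
    star (a • ψp + b • ψm) ⬝ᵥ
        ((P ⊗ₖ (1 : Matrix R R ℂ)) *ᵥ (a • ψp + b • ψm)) =
      star ψp ⬝ᵥ ((P ⊗ₖ (1 : Matrix R R ℂ)) *ᵥ ψp) := by
  have hUunit := kronecker_mem_unitary hUS hUR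
  have hVunit := kronecker_mem_unitary hVS hVR
  obtain ⟨hpm, hmp⟩ := star_dotProduct_mulVec_eq_zero_of_mulVec_eq_neg hUunit
    (kronecker_mul_kronecker_one_mul_conjTranspose hUP hUR) hU hUm
  have hmm : star ψm ⬝ᵥ ((P ⊗ₖ (1 : Matrix R R ℂ)) *ᵥ ψm) =
      star ψp ⬝ᵥ ((P ⊗ₖ (1 : Matrix R R ℂ)) *ᵥ ψp) := by
    rw [hψm]
    exact star_mulVec_dotProduct_mulVec_mulVec_of_conj_eq hVunit
      (kronecker_mul_kronecker_one_mul_conjTranspose hVP hVR) ψp ψp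
  exact star_smul_add_smul_dotProduct_mulVec hpm hmp hmm hab

/-- Parity lemma for twofold-degenerate ground spaces: with product
unitaries `U = U_S ⊗ U_R`, `V = V_S ⊗ V_R`, a projection `P` on `ℂ^S` invariant under
conjugation by `U_S` and `V_S`, a unit vector `ψ₊` with `U ψ₊ = ψ₊`, `ψ₋ = V ψ₊`, and
`U ψ₋ = -ψ₋`, every normalized `ψ = a ψ₊ + b ψ₋` satisfies
`⟨ψ, (P ⊗ 1_R) ψ⟩ = ⟨ψ₊, (P ⊗ 1_R) ψ₊⟩`. -/
theorem stmt14 {S R : Type*} [Fintype S] [Fintype R] [DecidableEq S] [DecidableEq R]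
    [Nonempty S] [Nonempty R]
    (US VS : Matrix S S ℂ) (UR VR : Matrix R R ℂ)
    (hUS : US ∈ Matrix.unitaryGroup S ℂ) (hVS : VS ∈ Matrix.unitaryGroup S ℂ)
    (hUR : UR ∈ Matrix.unitaryGroup R ℂ) (hVR : VR ∈ Matrix.unitaryGroup R ℂ)
    (P : Matrix S S ℂ) (hP : P.IsHermitian) (hP2 : P * P = P)
    (hUP : US * P * USᴴ = P) (hVP : VS * P * VSᴴ = P)
    (ψp : S × R → ℂ) (hψp : star ψp ⬝ᵥ ψp = 1)
    (hU : (US ⊗ₖ UR) *ᵥ ψp = ψp)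
    (ψm : S × R → ℂ) (hψm : ψm = (VS ⊗ₖ VR) *ᵥ ψp)
    (hUm : (US ⊗ₖ UR) *ᵥ ψm = -ψm)
    (a b : ℂ) (hab : ‖a‖ ^ 2 + ‖b‖ ^ 2 = 1) :
    star (a • ψp + b • ψm) ⬝ᵥ
        ((P ⊗ₖ (1 : Matrix R R ℂ)) *ᵥ (a • ψp + b • ψm)) =
      star ψp ⬝ᵥ ((P ⊗ₖ (1 : Matrix R R ℂ)) *ᵥ ψp) :=
  stmt14_general US VS UR VR hUS hVS hUR hVR P hUP hVP ψp hU ψm hψm hUm a b hab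
end

section
/- (Local frustration equals average frustration for twofold degeneracy) Let S, R be nonempty finite types. Let U_S, V_S be unitary matrices on ℂ^S and U_R, V_R unitary matrices on ℂ^R, and set U = U_S ⊗ U_R and V = V_S ⊗ V_R. Let Π be an orthogonal projection matrix on ℂ^S with U_S Π U_S^† = Π and V_S Π V_S^† = Π. Let ψ_+ ∈ ℂ^{S×R} be a unit vector with U ψ_+ = ψ_+, set ψ_- = V ψ_+, and assume U ψ_- = −ψ_-. Let μ = ½ |ψ_+⟩⟨ψ_+| + ½ |ψ_-⟩⟨ψ_-| be the maximally mixed ground state. Then for all a, b ∈ ℂ with |a|² + |b|² = 1 and ψ = a ψ_+ + b ψ_-, one has 1 − ⟨ψ, (Π ⊗ 1_R) ψ⟩ = 1 − tr((Π ⊗ 1_R) μ). -/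
open Matrix
open scoped ComplexOrder Kronecker Classical

/-! The symmetry `U` preserves the form `⟨·, (P ⊗ 1) ·⟩`, and `ψ₊`, `ψ₋` are eigenvectors of `U`
for the eigenvalues `1` and `-1`, so the cross terms of `⟨ψ, (P ⊗ 1) ψ⟩` vanish. The symmetry `V`
preserves the same form and maps `ψ₊` to `ψ₋`, so both diagonal terms equal `⟨ψ₊, (P ⊗ 1) ψ₊⟩`,
which is therefore also the value of `tr((P ⊗ 1) μ)` and, since `|a|² + |b|² = 1`, of
`⟨ψ, (P ⊗ 1) ψ⟩`. -/

theorem star_mul_mul_eq_of_mul_mul_star_eq {M : Type*} [Monoid M] [StarMul M] {U P : M}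
    (hU : U ∈ unitary M) (h : U * P * star U = P) : star U * P * U = P :=
  calc star U * P * U = star U * (U * P * star U) * U := by rw [h]
    _ = (star U * U) * P * (star U * U) := by simp only [mul_assoc]
    _ = P := by rw [Unitary.star_mul_self_of_mem hU, one_mul, mul_one]

section Matrix

variable {n m 𝕜 : Type*} [Fintype n] [Fintype m] [DecidableEq m]

theorem conjTranspose_kronecker_mul_kronecker_one_mul_of_mem_unitaryGroup [DecidableEq n]
    [CommRing 𝕜] [StarRing 𝕜] {A P : Matrix n n 𝕜} {B : Matrix m m 𝕜}
    (hA : A ∈ unitaryGroup n 𝕜) (hB : B ∈ unitaryGroup m 𝕜) (hAP : A * P * Aᴴ = P) :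
    (A ⊗ₖ B)ᴴ * (P ⊗ₖ (1 : Matrix m m 𝕜)) * (A ⊗ₖ B) = P ⊗ₖ (1 : Matrix m m 𝕜) := by
  rw [conjTranspose_kronecker, ← mul_kronecker_mul, ← mul_kronecker_mul, mul_one,
    ← star_eq_conjTranspose, ← star_eq_conjTranspose,
    star_mul_mul_eq_of_mul_mul_star_eq hA hAP, Unitary.star_mul_self_of_mem hB]

theorem star_mulVec_dotProduct_mulVec_mulVec [CommRing 𝕜] [StarRing 𝕜]
    {U Q : Matrix n n 𝕜} (hQ : Uᴴ * Q * U = Q) (x y : n → 𝕜) :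
    star (U *ᵥ x) ⬝ᵥ (Q *ᵥ (U *ᵥ y)) = star x ⬝ᵥ (Q *ᵥ y) := by
  rw [star_mulVec, ← dotProduct_mulVec, mulVec_mulVec, mulVec_mulVec, hQ]

theorem star_dotProduct_mulVec_eq_zero_of_mulVec_eq_smul [Field 𝕜] [StarRing 𝕜]
    {U Q : Matrix n n 𝕜} (hQ : Uᴴ * Q * U = Q) {x y : n → 𝕜} {c d : 𝕜}
    (hx : U *ᵥ x = c • x) (hy : U *ᵥ y = d • y) (hcd : star c * d ≠ 1) :
    star x ⬝ᵥ (Q *ᵥ y) = 0 := by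
  have h := star_mulVec_dotProduct_mulVec_mulVec hQ x y
  rw [hx, hy, star_smul, mulVec_smul, smul_dotProduct, dotProduct_smul, smul_eq_mul,
    smul_eq_mul, ← mul_assoc] at h
  have h' : (star c * d - 1) * (star x ⬝ᵥ (Q *ᵥ y)) = 0 := by linear_combination h
  exact (mul_eq_zero.mp h').resolve_left (sub_ne_zero.mpr hcd)

theorem star_dotProduct_mulVec_smul_add_smul [CommRing 𝕜] [StarRing 𝕜]
    (Q : Matrix n n 𝕜) {x y : n → 𝕜} (hxy : star x ⬝ᵥ (Q *ᵥ y) = 0)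
    (hyx : star y ⬝ᵥ (Q *ᵥ x) = 0) (a b : 𝕜) :
    star (a • x + b • y) ⬝ᵥ (Q *ᵥ (a • x + b • y)) =
      star a * a * (star x ⬝ᵥ (Q *ᵥ x)) + star b * b * (star y ⬝ᵥ (Q *ᵥ y)) := by
  simp only [star_add, star_smul, mulVec_add, mulVec_smul, add_dotProduct, dotProduct_add,
    smul_dotProduct, dotProduct_smul, smul_eq_mul, hxy, hyx]
  ring

end Matrix

theorem trace_mul_outer {n : Type*} [Fintype n] (M : Matrix n n ℂ) (φ : n → ℂ) :
    (M * outer φ).trace = star φ ⬝ᵥ (M *ᵥ φ) := by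
  simp only [trace, diag, mul_apply, outer, dotProduct, mulVec, Pi.star_apply, Finset.mul_sum]
  exact Finset.sum_congr rfl fun i _ => Finset.sum_congr rfl fun j _ => by ring

theorem stmt15_general {S R : Type*} [Fintype S] [Fintype R] [DecidableEq S] [DecidableEq R]
    (US VS : Matrix S S ℂ) (UR VR : Matrix R R ℂ)
    (hUS : US ∈ Matrix.unitaryGroup S ℂ) (hVS : VS ∈ Matrix.unitaryGroup S ℂ)
    (hUR : UR ∈ Matrix.unitaryGroup R ℂ) (hVR : VR ∈ Matrix.unitaryGroup R ℂ)
    (P : Matrix S S ℂ)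
    (hUP : US * P * USᴴ = P) (hVP : VS * P * VSᴴ = P)
    (ψp : S × R → ℂ)
    (hU : (US ⊗ₖ UR) *ᵥ ψp = ψp)
    (ψm : S × R → ℂ) (hψm : ψm = (VS ⊗ₖ VR) *ᵥ ψp)
    (hUm : (US ⊗ₖ UR) *ᵥ ψm = -ψm)
    (μ : Matrix (S × R) (S × R) ℂ)
    (hμ : μ = (1 / 2 : ℂ) • outer ψp + (1 / 2 : ℂ) • outer ψm)
    (a b : ℂ) (hab : ‖a‖ ^ 2 + ‖b‖ ^ 2 = 1) :
    1 - star (a • ψp + b • ψm) ⬝ᵥ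
          ((P ⊗ₖ (1 : Matrix R R ℂ)) *ᵥ (a • ψp + b • ψm)) =
      1 - ((P ⊗ₖ (1 : Matrix R R ℂ)) * μ).trace := by
  have hUQ := conjTranspose_kronecker_mul_kronecker_one_mul_of_mem_unitaryGroup hUS hUR hUP
  have hVQ := conjTranspose_kronecker_mul_kronecker_one_mul_of_mem_unitaryGroup hVS hVR hVP
  have hUp : (US ⊗ₖ UR) *ᵥ ψp = (1 : ℂ) • ψp := by rw [hU, one_smul]
  have hUm' : (US ⊗ₖ UR) *ᵥ ψm = (-1 : ℂ) • ψm := by rw [hUm, neg_one_smul]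
  have hpm := star_dotProduct_mulVec_eq_zero_of_mulVec_eq_smul hUQ hUp hUm' (by norm_num)
  have hmp := star_dotProduct_mulVec_eq_zero_of_mulVec_eq_smul hUQ hUm' hUp (by norm_num)
  have hmm : star ψm ⬝ᵥ ((P ⊗ₖ 1) *ᵥ ψm) = star ψp ⬝ᵥ ((P ⊗ₖ 1) *ᵥ ψp) := by
    rw [hψm, star_mulVec_dotProduct_mulVec_mulVec hVQ]
  have hab_star : star a * a + star b * b = 1 := by
    simp only [Complex.star_def, Complex.conj_mul']
    exact_mod_cast hab
  rw [star_dotProduct_mulVec_smul_add_smul _ hpm hmp, hμ, Matrix.mul_add, Matrix.mul_smul,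
    Matrix.mul_smul, trace_add, trace_smul, trace_smul, trace_mul_outer, trace_mul_outer, hmm]
  linear_combination -(star ψp ⬝ᵥ ((P ⊗ₖ 1) *ᵥ ψp)) * hab_star

/-- Local frustration equals average frustration for twofold
degeneracy: in the setting of the parity lemma, with
`μ = ½|ψ₊⟩⟨ψ₊| + ½|ψ₋⟩⟨ψ₋|` the maximally mixed ground state, every normalized
`ψ = a ψ₊ + b ψ₋` satisfies `1 - ⟨ψ, (P ⊗ 1_R) ψ⟩ = 1 - tr((P ⊗ 1_R) μ)`. -/
theorem stmt15 {S R : Type*} [Fintype S] [Fintype R] [DecidableEq S] [DecidableEq R]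
    [Nonempty S] [Nonempty R]
    (US VS : Matrix S S ℂ) (UR VR : Matrix R R ℂ)
    (hUS : US ∈ Matrix.unitaryGroup S ℂ) (hVS : VS ∈ Matrix.unitaryGroup S ℂ)
    (hUR : UR ∈ Matrix.unitaryGroup R ℂ) (hVR : VR ∈ Matrix.unitaryGroup R ℂ)
    (P : Matrix S S ℂ) (hP : P.IsHermitian) (hP2 : P * P = P)
    (hUP : US * P * USᴴ = P) (hVP : VS * P * VSᴴ = P)
    (ψp : S × R → ℂ) (hψp : star ψp ⬝ᵥ ψp = 1)
    (hU : (US ⊗ₖ UR) *ᵥ ψp = ψp)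
    (ψm : S × R → ℂ) (hψm : ψm = (VS ⊗ₖ VR) *ᵥ ψp)
    (hUm : (US ⊗ₖ UR) *ᵥ ψm = -ψm)
    (μ : Matrix (S × R) (S × R) ℂ)
    (hμ : μ = (1 / 2 : ℂ) • outer ψp + (1 / 2 : ℂ) • outer ψm)
    (a b : ℂ) (hab : ‖a‖ ^ 2 + ‖b‖ ^ 2 = 1) :
    1 - star (a • ψp + b • ψm) ⬝ᵥ
          ((P ⊗ₖ (1 : Matrix R R ℂ)) *ᵥ (a • ψp + b • ψm)) =
      1 - ((P ⊗ₖ (1 : Matrix R R ℂ)) * μ).trace :=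
  stmt15_general US VS UR VR hUS hVS hUR hVR P hUP hVP ψp hU ψm hψm hUm μ hμ a b hab
end

section
/- (Reduction of the degenerate bound to the non-degenerate bound) Let S, R, A be nonempty finite types, let φ ∈ ℂ^{S×R} and χ ∈ ℂ^A be unit vectors, let ψ = φ ⊗ χ ∈ ℂ^{S×R×A}, and let 1 ≤ d ≤ |S|. Then C^(d)_{S|A}(tr_R |ψ⟩⟨ψ|) = 0 and E^(d)_{S|R}(tr_A |ψ⟩⟨ψ|) = ε^(d)(tr_{RA} |ψ⟩⟨ψ|); consequently E^(d)_{S|R}(tr_A |ψ⟩⟨ψ|) + C^(d)_{S|A}(tr_R |ψ⟩⟨ψ|) = ε^(d)(tr_R |φ⟩⟨φ|). -/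
open Matrix
open scoped ComplexOrder Kronecker Classical

section Helpers

lemma quad' {n : Type*} [Fintype n] (u w : n → ℂ) :
    star w ⬝ᵥ ((outer u) *ᵥ w) = star (star u ⬝ᵥ w) * (star u ⬝ᵥ w) := by
  simp only [outer, mulVec, dotProduct, Pi.star_apply, star_sum, star_mul', star_star,
    Finset.mul_sum, Finset.sum_mul]
  rw [Finset.sum_comm]
  refine Finset.sum_congr rfl fun i _ => Finset.sum_congr rfl fun j _ => ?_
  ring

lemma dotProduct_sumr' {n : Type*} [Fintype n] {m : ℕ} (v : n → ℂ) (w : Fin m → n → ℂ) :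
    v ⬝ᵥ (∑ k, w k) = ∑ k, v ⬝ᵥ w k := by
  simp only [dotProduct, Finset.sum_apply, Finset.mul_sum]
  rw [Finset.sum_comm]

lemma sum_mulVec'' {n : Type*} [Fintype n] {m : ℕ} (M : Fin m → Matrix n n ℂ) (v : n → ℂ) :
    (∑ k, M k) *ᵥ v = ∑ k, (M k) *ᵥ v := by
  ext i
  simp only [mulVec, dotProduct, Matrix.sum_apply, Finset.sum_apply, Finset.sum_mul]
  rw [Finset.sum_comm]

lemma rigidity' {n : Type*} [Fintype n] (φ : n → ℂ) (hφ : star φ ⬝ᵥ φ = 1)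
    {m : ℕ} (p : Fin m → ℝ) (ψ : Fin m → n → ℂ) (hp : ∀ k, 0 ≤ p k)
    (hψ : ∀ k, star (ψ k) ⬝ᵥ ψ k = 1)
    (hdec : outer φ = ∑ k, (p k : ℂ) • outer (ψ k)) :
    ∀ k, p k ≠ 0 → outer (ψ k) = outer φ := by
  intro k hk
  set c : ℂ := star φ ⬝ᵥ ψ k with hc
  set v : n → ℂ := ψ k - c • φ with hv
  have hsv : star v = star (ψ k) - star c • star φ := by
    rw [hv]; ext i; simp [star_mul']
  have hv0 : star φ ⬝ᵥ v = 0 := by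
    simp [hv, dotProduct_sub, dotProduct_smul, hφ, ← hc]
  have hsum : (0 : ℂ) = ∑ j, (p j : ℂ) * (star (star (ψ j) ⬝ᵥ v) * (star (ψ j) ⬝ᵥ v)) := by
    have h1 : star v ⬝ᵥ ((outer φ) *ᵥ v) = 0 := by
      rw [quad', hv0]; simp
    have h2 : star v ⬝ᵥ ((outer φ) *ᵥ v)
        = ∑ j, (p j : ℂ) * (star (star (ψ j) ⬝ᵥ v) * (star (ψ j) ⬝ᵥ v)) := by
      rw [hdec, sum_mulVec'', dotProduct_sumr']
      refine Finset.sum_congr rfl fun j _ => ?_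
      rw [smul_mulVec, dotProduct_smul, quad', smul_eq_mul]
    rw [← h1, h2]
  have hw : star (ψ k) ⬝ᵥ v = 0 := by
    have hre : (0 : ℝ) = ∑ j, p j * ‖star (ψ j) ⬝ᵥ v‖ ^ 2 := by
      have := hsum
      simp only [Complex.star_def, Complex.conj_mul'] at this
      exact_mod_cast congrArg Complex.re this
    have hz := (Finset.sum_eq_zero_iff_of_nonneg (fun j _ =>
      mul_nonneg (hp j) (by positivity))).mp hre.symm k (Finset.mem_univ k)
    have : ‖star (ψ k) ⬝ᵥ v‖ = 0 := by
      rcases mul_eq_zero.mp hz with h | h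
      · exact absurd h hk
      · exact pow_eq_zero_iff (n := 2) (by norm_num) |>.mp h
    exact norm_eq_zero.mp this
  have hvzero : v = 0 := by
    apply dotProduct_star_self_eq_zero.mp
    rw [hsv, sub_dotProduct, smul_dotProduct, smul_eq_mul, hw, hv0, mul_zero, sub_zero]
  have hpsik : ψ k = c • φ := sub_eq_zero.mp (hv ▸ hvzero)
  have hcc : star c * c = 1 := by
    have h1 := hψ k
    rw [hpsik] at h1
    rw [show star (c • φ) = star c • star φ by ext i; simp] at h1
    rw [smul_dotProduct, dotProduct_smul, hφ] at h1
    simpa [mul_assoc] using h1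
  funext i j
  rw [hpsik]
  show (c • φ) i * star ((c • φ) j) = φ i * star (φ j)
  simp only [Pi.smul_apply, smul_eq_mul, star_mul']
  calc c * φ i * (star c * star (φ j)) = (star c * c) * (φ i * star (φ j)) := by ring
    _ = φ i * star (φ j) := by rw [hcc, one_mul]

lemma kronComp' {S A : Type*} [Fintype S] [Fintype A] [DecidableEq S]
    (σ : Matrix S S ℂ) (χ : A → ℂ) (M : Matrix A A ℂ) :
    ((1 : Matrix S S ℂ) ⊗ₖ M) * (Matrix.of fun (p q : S × A) => σ p.1 q.1 * (χ p.2 * star (χ q.2)))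
    = Matrix.of fun (p q : S × A) => σ p.1 q.1 * ((M *ᵥ χ) p.2 * star (χ q.2)) := by
  ext ⟨s, a⟩ ⟨s', a'⟩
  rw [Matrix.mul_apply, Fintype.sum_prod_type]
  simp only [Matrix.of_apply, kroneckerMap_apply, Matrix.one_apply, ite_mul, one_mul, zero_mul]
  rw [Finset.sum_comm]
  simp only [Finset.sum_ite_eq, Finset.mem_univ, if_true]
  simp only [mulVec, dotProduct, Finset.sum_mul, Finset.mul_sum]
  refine Finset.sum_congr rfl fun b _ => ?_
  ring

lemma povmSum' {S A : Type*} [Fintype S] [Fintype A] [DecidableEq S] [DecidableEq A]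
    (σ : Matrix S S ℂ) (htrσ : ∑ s, σ s s = 1)
    (χ : A → ℂ) (hχ : star χ ⬝ᵥ χ = 1)
    (d : ℕ) {m : ℕ} (M : Fin m → Matrix A A ℂ) (hMsum : ∑ x, M x = 1)
    (ρ : Matrix (S × A) (S × A) ℂ)
    (hρ : ρ = Matrix.of fun (p q : S × A) => σ p.1 q.1 * (χ p.2 * star (χ q.2))) :
    (∑ x, if (((1 : Matrix S S ℂ) ⊗ₖ M x) * ρ).trace = 0 then 0
       else ((((1 : Matrix S S ℂ) ⊗ₖ M x) * ρ).trace).re *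
         epsD (((((1 : Matrix S S ℂ) ⊗ₖ M x) * ρ).trace)⁻¹ •
           ptraceR (((1 : Matrix S S ℂ) ⊗ₖ M x) * ρ)) d)
     = epsD σ d := by
  set q : Fin m → ℂ := fun x => star χ ⬝ᵥ (M x *ᵥ χ) with hq
  have htr : ∀ x, (((1 : Matrix S S ℂ) ⊗ₖ M x) * ρ).trace = q x := by
    intro x
    rw [hρ, kronComp', Matrix.trace]
    simp only [Matrix.diag, Matrix.of_apply]
    rw [Fintype.sum_prod_type]
    dsimp only
    rw [← Finset.sum_mul_sum, htrσ, one_mul, hq]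
    simp only [dotProduct, Pi.star_apply]
    exact Finset.sum_congr rfl fun a _ => by ring
  have hpt : ∀ x, ptraceR (((1 : Matrix S S ℂ) ⊗ₖ M x) * ρ) = q x • σ := by
    intro x
    rw [hρ, kronComp']
    funext s s'
    show ∑ a, σ s s' * ((M x *ᵥ χ) a * star (χ a)) = q x * σ s s'
    rw [hq]
    simp only [dotProduct, Finset.sum_mul, Finset.mul_sum, Pi.star_apply]
    exact Finset.sum_congr rfl fun a _ => by ring
  have hqsum : ∑ x, q x = 1 := by
    rw [hq]
    show ∑ x, star χ ⬝ᵥ (M x *ᵥ χ) = 1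
    rw [← dotProduct_sumr', ← sum_mulVec'', hMsum, one_mulVec, hχ]
  calc (∑ x, if (((1 : Matrix S S ℂ) ⊗ₖ M x) * ρ).trace = 0 then 0
       else ((((1 : Matrix S S ℂ) ⊗ₖ M x) * ρ).trace).re *
         epsD (((((1 : Matrix S S ℂ) ⊗ₖ M x) * ρ).trace)⁻¹ •
           ptraceR (((1 : Matrix S S ℂ) ⊗ₖ M x) * ρ)) d)
      = ∑ x, (q x).re * epsD σ d := by
        refine Finset.sum_congr rfl fun x _ => ?_
        rw [htr x, hpt x]
        by_cases hqx : q x = 0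
        · simp [hqx]
        · rw [if_neg hqx, smul_smul, inv_mul_cancel₀ hqx, one_smul]
    _ = (∑ x, q x).re * epsD σ d := by rw [← Finset.sum_mul, ← Complex.re_sum]
    _ = epsD σ d := by rw [hqsum]; norm_num

end Helpers

/-- Reduction of the degenerate bound to the non-degenerate bound:
for unit vectors `φ ∈ ℂ^{S×R}` and `χ ∈ ℂ^A`, the product state `ψ = φ ⊗ χ`
satisfies `C^(d)_{S|A}(tr_R |ψ⟩⟨ψ|) = 0` and
`E^(d)_{S|R}(tr_A |ψ⟩⟨ψ|) = ε^(d)(tr_{RA} |ψ⟩⟨ψ|)`; consequently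
`E^(d)_{S|R}(tr_A |ψ⟩⟨ψ|) + C^(d)_{S|A}(tr_R |ψ⟩⟨ψ|) = ε^(d)(tr_R |φ⟩⟨φ|)`. -/
theorem stmt16 {S R A : Type*} [Fintype S] [Fintype R] [Fintype A]
    [DecidableEq S] [DecidableEq R] [DecidableEq A]
    [Nonempty S] [Nonempty R] [Nonempty A]
    (φ : S × R → ℂ) (χ : A → ℂ)
    (hφ : star φ ⬝ᵥ φ = 1) (hχ : star χ ⬝ᵥ χ = 1)
    (ψ : S × R × A → ℂ) (hψ : ψ = fun x => φ (x.1, x.2.1) * χ x.2.2)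
    (d : ℕ) (hd1 : 1 ≤ d) (hdn : d ≤ Fintype.card S) :
    classC d (ptrace2 (outer ψ)) = 0 ∧
      convRoofE d (ptrace3 (outer ψ)) = epsD (ptrace23 (outer ψ)) d ∧
      convRoofE d (ptrace3 (outer ψ)) + classC d (ptrace2 (outer ψ)) =
        epsD (ptraceR (outer φ)) d := by
  have hχ' : ∑ a, χ a * star (χ a) = 1 := by
    rw [show (1 : ℂ) = star χ ⬝ᵥ χ from hχ.symm]
    simp only [dotProduct, Pi.star_apply]
    exact Finset.sum_congr rfl fun a _ => by ring
  have h3 : ptrace3 (outer ψ) = outer φ := by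
    funext p q
    show ∑ a, ψ (p.1, p.2, a) * star (ψ (q.1, q.2, a)) = φ p * star (φ q)
    rw [hψ]
    calc ∑ a, (φ (p.1, p.2) * χ a) * star (φ (q.1, q.2) * χ a)
        = ∑ a, (φ (p.1, p.2) * star (φ (q.1, q.2))) * (χ a * star (χ a)) := by
          refine Finset.sum_congr rfl fun a _ => ?_
          rw [star_mul']; ring
      _ = (φ (p.1, p.2) * star (φ (q.1, q.2))) * ∑ a, χ a * star (χ a) := by
          rw [Finset.mul_sum]
      _ = φ p * star (φ q) := by rw [hχ', mul_one, Prod.mk.eta]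
  have h23 : ptrace23 (outer ψ) = ptraceR (outer φ) := by
    funext s s'
    show ∑ r, ∑ a, ψ (s, r, a) * star (ψ (s', r, a)) = ∑ r, φ (s, r) * star (φ (s', r))
    refine Finset.sum_congr rfl fun r _ => ?_
    rw [hψ]
    calc ∑ a, (φ (s, r) * χ a) * star (φ (s', r) * χ a)
        = ∑ a, (φ (s, r) * star (φ (s', r))) * (χ a * star (χ a)) := by
          refine Finset.sum_congr rfl fun a _ => ?_
          rw [star_mul']; ring
      _ = (φ (s, r) * star (φ (s', r))) * ∑ a, χ a * star (χ a) := by rw [Finset.mul_sum]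
      _ = φ (s, r) * star (φ (s', r)) := by rw [hχ', mul_one]
  have h2 : ptrace2 (outer ψ) = Matrix.of fun (p q : S × A) =>
      (ptraceR (outer φ)) p.1 q.1 * (χ p.2 * star (χ q.2)) := by
    funext p q
    show ∑ r, ψ (p.1, r, p.2) * star (ψ (q.1, r, q.2))
        = (∑ r, φ (p.1, r) * star (φ (q.1, r))) * (χ p.2 * star (χ q.2))
    rw [hψ, Finset.sum_mul]
    refine Finset.sum_congr rfl fun r _ => ?_
    rw [star_mul']; ring
  have htrσ : ∑ s, (ptraceR (outer φ)) s s = 1 := by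
    rw [show (1 : ℂ) = star φ ⬝ᵥ φ from hφ.symm]
    show ∑ s, ∑ r, φ (s, r) * star (φ (s, r)) = _
    simp only [dotProduct, Pi.star_apply, Fintype.sum_prod_type]
    exact Finset.sum_congr rfl fun s _ => Finset.sum_congr rfl fun r _ => by ring
  have hptρ : ptraceR (ptrace2 (outer ψ)) = ptraceR (outer φ) := by
    rw [h2]
    funext s s'
    show ∑ a, (ptraceR (outer φ)) s s' * (χ a * star (χ a)) = _
    rw [← Finset.mul_sum, hχ', mul_one]
  have hC : classC d (ptrace2 (outer ψ)) = 0 := by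
    unfold classC
    rw [hptρ]
    have hset : { e : ℝ | ∃ (m : ℕ) (M : Fin m → Matrix A A ℂ),
        (∀ x, (M x).PosSemidef) ∧ (∑ x, M x = 1) ∧
        e = ∑ x,
          (if (((1 : Matrix S S ℂ) ⊗ₖ M x) * (ptrace2 (outer ψ))).trace = 0 then 0
           else ((((1 : Matrix S S ℂ) ⊗ₖ M x) * (ptrace2 (outer ψ))).trace).re *
             epsD (((((1 : Matrix S S ℂ) ⊗ₖ M x) * (ptrace2 (outer ψ))).trace)⁻¹ •
               ptraceR (((1 : Matrix S S ℂ) ⊗ₖ M x) * (ptrace2 (outer ψ)))) d) }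
        = {epsD (ptraceR (outer φ)) d} := by
      ext e
      simp only [Set.mem_setOf_eq, Set.mem_singleton_iff]
      constructor
      · rintro ⟨m, M, hM, hMsum, rfl⟩
        exact povmSum' (ptraceR (outer φ)) htrσ χ hχ d M hMsum _ h2
      · rintro rfl
        refine ⟨1, fun _ => 1, fun _ => Matrix.PosSemidef.one, by simp, ?_⟩
        exact (povmSum' (ptraceR (outer φ)) htrσ χ hχ d (fun _ : Fin 1 => 1)
          (by simp) _ h2).symm
    rw [hset, csInf_singleton, sub_self]
  have hE : convRoofE d (ptrace3 (outer ψ)) = epsD (ptraceR (outer φ)) d := by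
    unfold convRoofE
    have hset : { e : ℝ | ∃ (m : ℕ) (p : Fin m → ℝ) (ψ' : Fin m → (S × R → ℂ)),
        (∀ k, 0 ≤ p k) ∧ (∑ k, p k = 1) ∧
        (∀ k, star (ψ' k) ⬝ᵥ ψ' k = 1) ∧
        (ptrace3 (outer ψ) = ∑ k, (p k : ℂ) • outer (ψ' k)) ∧
        e = ∑ k, p k * epsD (ptraceR (outer (ψ' k))) d }
        = {epsD (ptraceR (outer φ)) d} := by
      ext e
      simp only [Set.mem_setOf_eq, Set.mem_singleton_iff]
      constructor
      · rintro ⟨m, p, ψ', hp, hpsum, hunit, hdec, rfl⟩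
        rw [h3] at hdec
        have hr := rigidity' φ hφ p ψ' hp hunit hdec
        calc ∑ k, p k * epsD (ptraceR (outer (ψ' k))) d
            = ∑ k, p k * epsD (ptraceR (outer φ)) d := by
              refine Finset.sum_congr rfl fun k _ => ?_
              by_cases hk : p k = 0
              · rw [hk, zero_mul, zero_mul]
              · rw [hr k hk]
          _ = epsD (ptraceR (outer φ)) d := by rw [← Finset.sum_mul, hpsum, one_mul]
      · rintro rfl
        refine ⟨1, fun _ => 1, fun _ => φ, fun _ => zero_le_one, by simp, fun _ => hφ, ?_, ?_⟩
        · rw [h3]; simp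
        · simp
    rw [hset, csInf_singleton]
  refine ⟨hC, ?_, ?_⟩
  · rw [hE, h23]
  · rw [hE, hC, add_zero]
end
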